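/- Let 0 < m ≤ M and n ≥ 2. For every deterministic online search strategy A there exists a price sequence σ of length n with all prices in [m, M] such that max_k σ k ≥ √(M/m) · profit(A, σ); that is, no deterministic online algorithm without advice achieves a competitive ratio better than √(M/m) for online search. -/

import Mathlib

/-- The maximum price of a price sequence of positive length. -/
noncomputable def maxPrice {n : ℕ} (hn : 0 < n) (σ : Fin n → ℝ) : ℝ :=
  Finset.univ.sup' ⟨⟨0, hn⟩, Finset.mem_univ _⟩ σ

/-- The profit of a deterministic online search strategy `A : List ℝ → Bool`
on the price sequence `σ`: it accepts at the least index `k` such that `A`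
applied to the prefix `[σ 0, …, σ k]` is `true`, obtaining `σ k`; if no such
index exists it must accept the last price `σ (n-1)`. -/
noncomputable def osProfit {n : ℕ} (hn : 0 < n) (A : List ℝ → Bool) (σ : Fin n → ℝ) : ℝ :=
  if h : ∃ k : Fin n, A ((List.ofFn σ).take ((k : ℕ) + 1)) = true then
    σ ((Finset.univ.filter (fun k : Fin n => A ((List.ofFn σ).take ((k : ℕ) + 1)) = true)).min'
      (h.imp fun k hk => Finset.mem_filter.mpr ⟨Finset.mem_univ _, hk⟩))
  else σ ⟨n - 1, Nat.sub_lt hn one_pos⟩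

/-!
The adversary first offers the geometric mean `p = √(m M)`. If the strategy accepts it, all later
prices are `M`; otherwise they are `m`, and the strategy ends up with `m` while `p` was available.
Either way the ratio is `M / p = p / m = √(M / m)`.
-/

section GeometricMean

variable {m M : ℝ}

theorem le_sqrt_mul_of_le (hm : 0 ≤ m) (hmM : m ≤ M) : m ≤ √(m * M) :=
  calc m = √(m * m) := (Real.sqrt_mul_self hm).symm
    _ ≤ √(m * M) := Real.sqrt_le_sqrt (mul_le_mul_of_nonneg_left hmM hm)

theorem sqrt_mul_le_of_le (hm : 0 ≤ m) (hmM : m ≤ M) : √(m * M) ≤ M :=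
  calc √(m * M) ≤ √(M * M) := Real.sqrt_le_sqrt (mul_le_mul_of_nonneg_right hmM (hm.trans hmM))
    _ = M := Real.sqrt_mul_self (hm.trans hmM)

theorem sqrt_div_mul_self (hm : 0 < m) (hM : 0 ≤ M) : √(M / m) * m = √(m * M) :=
  calc √(M / m) * m = √(M / m) * √(m * m) := by rw [Real.sqrt_mul_self hm.le]
    _ = √(M / m * (m * m)) := (Real.sqrt_mul (div_nonneg hM hm.le) _).symm
    _ = √(m * M) := by congr 1; field_simp

theorem sqrt_div_mul_sqrt_mul (hm : 0 < m) (hM : 0 ≤ M) : √(M / m) * √(m * M) = M := by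
  rw [← sqrt_div_mul_self hm hM, ← mul_assoc, Real.mul_self_sqrt (div_nonneg hM hm.le),
    div_mul_cancel₀ M hm.ne']

end GeometricMean

section OnlineSearch

variable {n : ℕ} (hn : 0 < n) (A : List ℝ → Bool) (σ : Fin n → ℝ)

theorem le_maxPrice (i : Fin n) : σ i ≤ maxPrice hn σ :=
  Finset.le_sup' σ (Finset.mem_univ i)

theorem take_one_ofFn : (List.ofFn σ).take 1 = [σ ⟨0, hn⟩] := by
  obtain ⟨n, rfl⟩ := Nat.exists_eq_add_of_lt hn
  simp [List.ofFn_succ]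

theorem osProfit_eq_head_of_accept (hA : A [σ ⟨0, hn⟩] = true) :
    osProfit hn A σ = σ ⟨0, hn⟩ := by
  have hA' : A ((List.ofFn σ).take (((⟨0, hn⟩ : Fin n) : ℕ) + 1)) = true := by
    rwa [zero_add, take_one_ofFn hn]
  rw [osProfit, dif_pos ⟨_, hA'⟩]
  congr 1
  refine le_antisymm (Finset.min'_le _ _ (by simpa using hA')) ?_
  exact Fin.le_iff_val_le_val.mpr (Nat.zero_le _)

theorem exists_osProfit_eq_of_reject (hn1 : 1 < n) (hA : A [σ ⟨0, hn⟩] = false) :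
    ∃ k : Fin n, (k : ℕ) ≠ 0 ∧ osProfit hn A σ = σ k := by
  rw [osProfit]
  split_ifs with hex
  · refine ⟨_, fun hk0 => ?_, rfl⟩
    obtain ⟨-, hacc⟩ := Finset.mem_filter.mp (Finset.min'_mem _ (Finset.filter_nonempty_iff.mpr
      (hex.imp fun k hk => ⟨Finset.mem_univ k, hk⟩)))
    rw [hk0, zero_add, take_one_ofFn hn, hA] at hacc
    exact Bool.false_ne_true hacc
  · exact ⟨_, by simp only; omega, rfl⟩

end OnlineSearch

/-- No deterministic online algorithm without advice achieves
a competitive ratio better than `√(M/m)` for online search: for every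
deterministic strategy `A` there is a price sequence of length `n ≥ 2` with
prices in `[m, M]` on which the optimal profit is at least `√(M/m)` times the
profit of `A`. -/
theorem deterministic_lower_bound_sqrt
    (m M : ℝ) (hm : 0 < m) (hmM : m ≤ M)
    (n : ℕ) (hn2 : 2 ≤ n) (hn : 0 < n) (A : List ℝ → Bool) :
    ∃ σ : Fin n → ℝ, (∀ i, m ≤ σ i ∧ σ i ≤ M) ∧
      Real.sqrt (M / m) * osProfit hn A σ ≤ maxPrice hn σ := by
  have hM : 0 ≤ M := hm.le.trans hmM
  set p := √(m * M)
  have hmp : m ≤ p := le_sqrt_mul_of_le hm.le hmM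
  have hpM : p ≤ M := sqrt_mul_le_of_le hm.le hmM
  let σ (b : ℝ) : Fin n → ℝ := fun i => if (i : ℕ) = 0 then p else b
  have hσ_mem (b : ℝ) (hmb : m ≤ b) (hbM : b ≤ M) (i : Fin n) : m ≤ σ b i ∧ σ b i ≤ M := by
    by_cases hi : (i : ℕ) = 0 <;> simp only [σ, hi, if_true, if_false] <;> constructor <;> assumption
  by_cases hA : A [p] = true
  · refine ⟨σ M, hσ_mem M hmM le_rfl, ?_⟩
    rw [osProfit_eq_head_of_accept hn A (σ M) hA, show σ M ⟨0, hn⟩ = p from if_pos rfl,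
      sqrt_div_mul_sqrt_mul hm hM]
    exact le_maxPrice hn (σ M) ⟨1, hn2⟩
  · obtain ⟨k, hk0, hk⟩ :=
      exists_osProfit_eq_of_reject hn A (σ m) hn2 (Bool.eq_false_iff.mpr hA)
    refine ⟨σ m, hσ_mem m le_rfl hmM, ?_⟩
    rw [hk, show σ m k = m from if_neg hk0, sqrt_div_mul_self hm hM]
    exact le_maxPrice hn (σ m) ⟨0, hn⟩
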